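/- Suppose U and V are primitive strings with |U| < |V| < 2|U|, U^3 is a prefix of a string S, and V is a period of S[0..3|V|) (with 3|V| ≤ |S|). Then a contradiction arises; i.e., it is impossible that both U^3 is a prefix of S and |V| is a period of the prefix of S of length 3|V| for a primitive V with |U| < |V| < 2|U|. -/
import Mathlib


/-- The `k`-th power of a string: concatenation of `k` copies of `V`. -/
def listPow {α : Type*} (V : List α) (k : ℕ) : List α := (List.replicate k V).flatten

/-- A string is primitive if it is not a power `V^k` with `k > 1`. -/
def PrimitiveList {α : Type*} (U : List α) : Prop :=
  ∀ (V : List α) (k : ℕ), 1 < k → U ≠ listPow V k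

/-- `p` is a period of the list `T`. -/
def IsPeriodL {α : Type*} (T : List α) (p : ℕ) : Prop :=
  0 < p ∧ p ≤ T.length ∧
    ∀ i : ℕ, (h : i + p < T.length) → T[i]'(by omega) = T[i + p]'h

lemma listPow_succ {α : Type*} (C : List α) (k : ℕ) :
    listPow C (k + 1) = C ++ listPow C k := by
  simp [listPow, List.replicate_succ]

lemma listPow_one {α : Type*} (C : List α) : listPow C 1 = C := by
  simp [listPow]

lemma listPow_add {α : Type*} (C : List α) (m k : ℕ) :
    listPow C (m + k) = listPow C m ++ listPow C k := by
  induction m with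
  | zero => simp [listPow]
  | succ n ih =>
    rw [Nat.succ_add, listPow_succ, listPow_succ, ih, List.append_assoc]

/-- Commuting nonempty words are powers of a common word. -/
lemma comm_words_pow {α : Type*} : ∀ (n : ℕ) (A B : List α),
    A.length + B.length ≤ n → A ≠ [] → B ≠ [] → A ++ B = B ++ A →
    ∃ (C : List α) (m k : ℕ), 0 < m ∧ 0 < k ∧ A = listPow C m ∧ B = listPow C k := by
  intro n
  induction n with
  | zero =>
    intro A B hlen hA _ _
    exfalso
    have := List.length_pos_iff.mpr hA
    omega
  | succ n ih =>
    intro A B hlen hA hB hcomm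
    rcases le_or_gt A.length B.length with hle | hlt
    · -- A is a prefix of B
      have hAB : A <+: A ++ B := List.prefix_append A B
      have hBA : B <+: A ++ B := by rw [hcomm]; exact List.prefix_append B A
      have hApB : A <+: B := List.prefix_of_prefix_length_le hAB hBA hle
      obtain ⟨B', rfl⟩ := hApB
      rcases eq_or_ne B' [] with rfl | hB'
      · exact ⟨A, 1, 1, one_pos, one_pos, (listPow_one A).symm, by
          simp [listPow_one]⟩
      · have hcomm' : A ++ B' = B' ++ A := by
          have h' := hcomm
          rw [List.append_assoc] at h'
          exact List.append_cancel_left h'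
        have hApos : 0 < A.length := List.length_pos_iff.mpr hA
        have hlen' : A.length + B'.length ≤ n := by
          simp only [List.length_append] at hlen; omega
        obtain ⟨C, m, k, hm, hk, hAC, hBC⟩ := ih A B' hlen' hA hB' hcomm'
        exact ⟨C, m, m + k, hm, by omega, hAC, by
          rw [listPow_add, ← hAC, ← hBC]⟩
    · -- B is a prefix of A
      have hBA : B <+: B ++ A := List.prefix_append B A
      have hAB : A <+: B ++ A := by rw [← hcomm]; exact List.prefix_append A B
      have hBpA : B <+: A := List.prefix_of_prefix_length_le hBA hAB (by omega)
      obtain ⟨A', rfl⟩ := hBpA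
      rcases eq_or_ne A' [] with rfl | hA'
      · exact ⟨B, 1, 1, one_pos, one_pos, by simp [listPow_one], (listPow_one B).symm⟩
      · have hcomm' : B ++ A' = A' ++ B := by
          have h' := hcomm.symm
          rw [List.append_assoc] at h'
          exact List.append_cancel_left h'
        have hBpos : 0 < B.length := List.length_pos_iff.mpr hB
        have hlen' : B.length + A'.length ≤ n := by
          simp only [List.length_append] at hlen; omega
        obtain ⟨C, m, k, hm, hk, hBC, hAC⟩ := ih B A' hlen' hB hA' hcomm'
        exact ⟨C, m + k, m, by omega, hm, by rw [listPow_add, ← hAC, ← hBC], hBC⟩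

lemma listPow_three {α : Type*} (U : List α) : listPow U 3 = U ++ U ++ U := by
  simp [listPow, List.replicate_succ]

/-- It is impossible that `U` and `V` are primitive with `|U| < |V| < 2|U|`, `U^3` is a
prefix of `S`, `3|V| ≤ |S|`, and `|V|` is a period of the prefix of `S` of length `3|V|`. -/
theorem no_close_periods {α : Type*} (U V S : List α)
    (hU : PrimitiveList U) (hV : PrimitiveList V)
    (h1 : U.length < V.length) (h2 : V.length < 2 * U.length)
    (hpre : listPow U 3 <+: S) (hlen : 3 * V.length ≤ S.length)
    (hper : IsPeriodL (S.take (3 * V.length)) V.length) : False := by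
  set u := U.length with hu
  set v := V.length with hv
  have hupos : 0 < u := by omega
  set d := v - u with hd
  have hdpos : 0 < d := by omega
  have hdlt : d < u := by omega
  rw [listPow_three] at hpre
  have hlen3 : (U ++ U ++ U).length = 3 * u := by simp; omega
  have hSlen : 3 * u ≤ S.length := by
    have := hpre.length_le; omega
  -- S agrees with U++U++U on [0, 3u)
  have hS : ∀ i (h : i < 3 * u), S[i]'(by omega) = (U ++ U ++ U)[i]'(by omega) :=
    fun i h => (hpre.getElem (by omega)).symm
  -- U++U++U has period u
  have huuu : ∀ j (h : j + u < 3 * u),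
      (U ++ U ++ U)[j]'(by omega) = (U ++ U ++ U)[j + u]'(by omega) := by
    intro j h
    rcases lt_or_ge j u with hj | hj
    · rw [List.getElem_append_left (by simp; omega),
        List.getElem_append_left hj,
        List.getElem_append_left (i := j + u) (by simp; omega),
        List.getElem_append_right (by omega)]
      congr 1; omega
    · rw [List.getElem_append_left (i := j) (by simp; omega),
        List.getElem_append_right (i := j) (by omega),
        List.getElem_append_right (i := j + u) (by simp; omega)]
      congr 1; simp; omega
  -- S has period u on [0, 3u)
  have hSu : ∀ j (h : j + u < 3 * u), S[j]'(by omega) = S[j + u]'(by omega) := by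
    intro j h
    rw [hS j (by omega), hS (j + u) (by omega)]
    exact huuu j h
  -- S has period v on [0, 3v)
  have htlen : (S.take (3 * v)).length = 3 * v := by simp; omega
  have hSv : ∀ i (h : i + v < 3 * v), S[i]'(by omega) = S[i + v]'(by omega) := by
    intro i h
    have h' : i + v < (S.take (3 * v)).length := by omega
    have := hper.2.2 i h'
    simpa [List.getElem_take] using this
  -- S has period d on [0, 2u)
  have hSd : ∀ i (h : i + d < 2 * u), S[i]'(by omega) = S[i + d]'(by omega) := by
    intro i h
    have h1' : i + v < 3 * v := by omega
    have h2' : (i + d) + u < 3 * u := by omega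
    have e1 := hSv i h1'
    have e2 := hSu (i + d) h2'
    have e3 : S[i + d + u]'(by omega) = S[i + v]'(by omega) := by
      congr 1
      omega
    rw [e1, ← e3, ← e2]
  -- Hence U = (U.drop d) ++ (U.take d)
  have key : U = U.drop d ++ U.take d := by
    apply List.ext_getElem (by simp; omega)
    intro i hi hi'
    have hiu : i < u := hi
    rcases lt_or_ge i (u - d) with hc | hc
    · rw [List.getElem_append_left (by simp; omega), List.getElem_drop]
      have hsd := hSd i (by omega)
      have e1 : S[i]'(by omega) = U[i]'(by omega) := by
        rw [hS i (by omega), List.getElem_append_left (by simp; omega),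
          List.getElem_append_left (by omega)]
      have e2 : S[i + d]'(by omega) = U[d + i]'(by omega) := by
        rw [hS (i + d) (by omega), List.getElem_append_left (by simp; omega),
          List.getElem_append_left (by omega)]
        congr 1; omega
      rw [← e2, ← hsd, e1]
    · rw [List.getElem_append_right (by simp; omega), List.getElem_take]
      have hsd := hSd i (by omega)
      have e1 : S[i]'(by omega) = U[i]'(by omega) := by
        rw [hS i (by omega), List.getElem_append_left (by simp; omega),
          List.getElem_append_left (by omega)]
      have e2 : S[i + d]'(by omega) = U[i - (U.drop d).length]'(by simp; omega) := by
        rw [hS (i + d) (by omega), List.getElem_append_left (by simp; omega),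
          List.getElem_append_right (by omega)]
        congr 1; simp; omega
      rw [← e2, ← hsd, e1]
  -- So take d and drop d commute
  have hcomm : U.take d ++ U.drop d = U.drop d ++ U.take d := by
    rw [List.take_append_drop]; exact key
  have hAne : U.take d ≠ [] := by
    apply List.ne_nil_of_length_pos
    rw [List.length_take]
    omega
  have hBne : U.drop d ≠ [] := by
    apply List.ne_nil_of_length_pos
    rw [List.length_drop]
    omega
  obtain ⟨C, m, k, hm, hk, hAC, hBC⟩ :=
    comm_words_pow ((U.take d).length + (U.drop d).length)
      (U.take d) (U.drop d) (le_refl _) hAne hBne hcomm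
  have hUpow : U = listPow C (m + k) := by
    rw [listPow_add, ← hAC, ← hBC, List.take_append_drop]
  exact hU C (m + k) (by omega) hUpow
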